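/- arXiv:1810.06020 — 2 statements merged into one kernel-verified Lean document; each statement's English description precedes it below -/
import Mathlib

section
/- Let A be an abelian category, let Φ⁺ ⊣ Φ⁻ and (Ψ⁺, Ψ⁻) be exact functors with Φ⁻Ψ⁺ = 0, Ψ⁻Φ⁺ = 0, Φ⁻Φ⁺ ≅ Id, Ψ⁻Ψ⁺ ≅ Id, and a natural short exact sequence 0 → Φ⁺Φ⁻ → Id → Ψ⁺Ψ⁻ → 0. Then for every object τ, the subobjects τ_k := (Φ⁺)^{k-1}(Φ⁻)^{k-1}(τ) form a decreasing filtration τ = τ_1 ⊇ τ_2 ⊇ ⋯ with successive quotients τ_k/τ_{k+1} ≅ (Φ⁺)^{k-1} Ψ⁺ (Ψ⁻(Φ⁻)^{k-1}(τ)). -/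
open CategoryTheory CategoryTheory.Limits

/-- The `k`-fold composition of an endofunctor. -/
def functorPow {A : Type*} [Category A] (T : A ⥤ A) : ℕ → (A ⥤ A)
  | 0 => 𝟭 A
  | k + 1 => T ⋙ functorPow T k

lemma functorPow_comm {A : Type*} [Category A] (T : A ⥤ A) :
    ∀ k : ℕ, functorPow T k ⋙ T = T ⋙ functorPow T k
  | 0 => rfl
  | k + 1 => by
    show T ⋙ (functorPow T k ⋙ T) = T ⋙ (T ⋙ functorPow T k)
    rw [functorPow_comm T k]

lemma functorPow_preservesFiniteLimits {A : Type*} [Category A] (T : A ⥤ A)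
    [PreservesFiniteLimits T] :
    ∀ k : ℕ, PreservesFiniteLimits (functorPow T k)
  | 0 => inferInstanceAs (PreservesFiniteLimits (𝟭 A))
  | k + 1 => by
    haveI := functorPow_preservesFiniteLimits T k
    exact comp_preservesFiniteLimits T (functorPow T k)

lemma functorPow_preservesFiniteColimits {A : Type*} [Category A] (T : A ⥤ A)
    [PreservesFiniteColimits T] :
    ∀ k : ℕ, PreservesFiniteColimits (functorPow T k)
  | 0 => inferInstanceAs (PreservesFiniteColimits (𝟭 A))
  | k + 1 => by
    haveI := functorPow_preservesFiniteColimits T k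
    exact comp_preservesFiniteColimits T (functorPow T k)

/-- Bernstein–Zelevinsky filtration: with exact functors `Φ⁺ ⊣ Φ⁻`, `Ψ⁺`, `Ψ⁻`
satisfying `Φ⁻Ψ⁺ = 0`, `Ψ⁻Φ⁺ = 0`, `Φ⁻Φ⁺ ≅ Id`, `Ψ⁻Ψ⁺ ≅ Id` and a natural short exact
sequence `0 → Φ⁺Φ⁻ → Id → Ψ⁺Ψ⁻ → 0`, every object `τ` has a decreasing filtration
`τ_k = (Φ⁺)^{k-1}(Φ⁻)^{k-1} τ` with successive quotients
`τ_k/τ_{k+1} ≅ (Φ⁺)^{k-1} Ψ⁺ Ψ⁻ (Φ⁻)^{k-1} τ`. -/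
theorem bernstein_zelevinsky_filtration
    {A : Type*} [Category A] [Abelian A]
    (Φp Φm Ψp Ψm : A ⥤ A)
    (adjΦ : Φp ⊣ Φm)
    [PreservesFiniteLimits Φp] [PreservesFiniteColimits Φp]
    [PreservesFiniteLimits Φm] [PreservesFiniteColimits Φm]
    [PreservesFiniteLimits Ψp] [PreservesFiniteColimits Ψp]
    [PreservesFiniteLimits Ψm] [PreservesFiniteColimits Ψm]
    (eΦ : Φp ⋙ Φm ≅ 𝟭 A) (eΨ : Ψp ⋙ Ψm ≅ 𝟭 A)
    (hΦΨ : ∀ X : A, IsZero (Φm.obj (Ψp.obj X)))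
    (hΨΦ : ∀ X : A, IsZero (Ψm.obj (Φp.obj X)))
    (ε : (Φm ⋙ Φp) ⟶ 𝟭 A) (η : 𝟭 A ⟶ (Ψm ⋙ Ψp))
    (hcomp : ∀ X : A, ε.app X ≫ η.app X = 0)
    (hSES : ∀ X : A, (ShortComplex.mk (ε.app X) (η.app X) (hcomp X)).ShortExact) :
    ∀ τ : A, ∀ k : ℕ,
      ∃ ι : (functorPow Φp (k + 1)).obj ((functorPow Φm (k + 1)).obj τ) ⟶
            (functorPow Φp k).obj ((functorPow Φm k).obj τ),
        Mono ι ∧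
        Nonempty (cokernel ι ≅
          (functorPow Φp k).obj (Ψp.obj (Ψm.obj ((functorPow Φm k).obj τ)))) := by
  intro τ k
  haveI := functorPow_preservesFiniteLimits Φp k
  haveI := functorPow_preservesFiniteColimits Φp k
  set F := functorPow Φp k with hF
  set X := (functorPow Φm k).obj τ with hX
  -- object identification
  have hObj : (functorPow Φp (k + 1)).obj ((functorPow Φm (k + 1)).obj τ)
      = F.obj (Φp.obj (Φm.obj X)) := by
    show F.obj (Φp.obj ((functorPow Φm k).obj (Φm.obj τ))) = F.obj (Φp.obj (Φm.obj X))
    have : (functorPow Φm k).obj (Φm.obj τ) = Φm.obj X := by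
      have h := functorPow_comm Φm k
      exact (congrArg (fun (G : A ⥤ A) => G.obj τ) h).symm
    rw [this]
  have hmono : Mono (ε.app X) := (hSES X).mono_f
  refine ⟨eqToHom hObj ≫ F.map (ε.app X), ?_, ?_⟩
  · haveI : Mono (F.map (ε.app X)) := F.map_mono _
    infer_instance
  · refine ⟨(cokernelIsoOfEq rfl).symm ≪≫ cokernelEpiComp (eqToHom hObj) (F.map (ε.app X))
      ≪≫ (PreservesCokernel.iso F (ε.app X)).symm ≪≫ F.mapIso ?_⟩
    exact IsColimit.coconePointUniqueUpToIso (cokernelIsCokernel (ε.app X)) (hSES X).gIsCokernel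
end

section
/- With the axioms of the Bernstein–Zelevinsky formalism (Φ⁻Φ⁺ ≅ Id, Ψ⁻Ψ⁺ ≅ Id, Φ⁻Ψ⁺ = 0, Ψ⁻Φ⁺ = 0, exactness of all four functors, and the natural short exact sequence 0 → Φ⁺Φ⁻ → Id → Ψ⁺Ψ⁻ → 0), if τ is a simple object (of 'size d', so that (Φ⁻)^d τ = 0) then there is exactly one k with τ^{(k)} := Ψ⁻(Φ⁻)^{k-1}(τ) ≠ 0, and τ ≅ (Φ⁺)^{k-1} Ψ⁺(τ^{(k)}). -/
open CategoryTheory CategoryTheory.Limits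

namespace CategoryTheory

lemma functorPow_succ_obj {A : Type*} [Category A] (T : A ⥤ A) (k : ℕ) (X : A) :
    (functorPow T (k + 1)).obj X = T.obj ((functorPow T k).obj X) := by
  induction k generalizing X with
  | zero => rfl
  | succ k ih => exact ih (T.obj X)

lemma isZero_functorPow_obj {A : Type*} [Category A] [HasZeroMorphisms A] (T : A ⥤ A)
    [T.PreservesZeroMorphisms] (k : ℕ) {X : A} (h : IsZero X) :
    IsZero ((functorPow T k).obj X) := by
  induction k generalizing X with
  | zero => exact h
  | succ k ih => exact ih (T.map_isZero h)

variable {C D : Type*} [Category C] [Category D]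

lemma Limits.IsZero.of_obj_of_comp_iso_id [HasZeroMorphisms C] [HasZeroMorphisms D]
    {F : C ⥤ D} {G : D ⥤ C} [G.PreservesZeroMorphisms] (e : F ⋙ G ≅ 𝟭 C) {X : C}
    (h : IsZero (F.obj X)) : IsZero X :=
  (G.map_isZero h).of_iso (e.app X).symm

lemma Functor.simple_of_simple_obj_of_comp_iso_id [HasZeroMorphisms C] [HasZeroMorphisms D]
    {F : C ⥤ D} {G : D ⥤ C} [F.PreservesMonomorphisms] [F.PreservesZeroMorphisms]
    (e : F ⋙ G ≅ 𝟭 C) (X : C) [Simple (F.obj X)] : Simple X := by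
  have hFG : (F ⋙ G).FullyFaithful := (Functor.FullyFaithful.id C).ofIso e.symm
  have := hFG.faithful
  have := hFG.reflectsIsomorphisms
  have := Functor.Faithful.of_comp F G
  have := reflectsIsomorphisms_of_comp F G
  exact F.simple_of_simple_obj X

lemma ShortComplex.ShortExact.isIso_f_or_isIso_g [Abelian C] {S : ShortComplex C}
    (hS : S.ShortExact) [Simple S.X₂] :
    (IsIso S.f ∧ IsZero S.X₃) ∨ (IsZero S.X₁ ∧ IsIso S.g) := by
  have := hS.mono_f
  have := hS.epi_g
  by_cases hf : S.f = 0
  · have := hS.exact.mono_g hf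
    exact Or.inr ⟨IsZero.of_mono_eq_zero _ hf, isIso_of_mono_of_epi _⟩
  · have := isIso_of_mono_of_nonzero hf
    have hg : S.g = 0 := by rw [← cancel_epi S.f, S.zero, comp_zero]
    exact Or.inl ⟨this, IsZero.of_epi_eq_zero _ hg⟩

section BernsteinZelevinsky

variable {A : Type*} [Category A] [Abelian A] {Φp Φm Ψp Ψm : A ⥤ A}
  [Φp.PreservesMonomorphisms] [Φp.PreservesZeroMorphisms] [Φm.PreservesZeroMorphisms]
  [Ψp.PreservesZeroMorphisms] [Ψm.PreservesZeroMorphisms]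

lemma Simple.isZero_Ψm_or_isZero_Φm (eΦ : Φp ⋙ Φm ≅ 𝟭 A) (eΨ : Ψp ⋙ Ψm ≅ 𝟭 A)
    (ε : Φm ⋙ Φp ⟶ 𝟭 A) (η : 𝟭 A ⟶ Ψm ⋙ Ψp) (hcomp : ∀ X : A, ε.app X ≫ η.app X = 0)
    (hSES : ∀ X : A, (ShortComplex.mk (ε.app X) (η.app X) (hcomp X)).ShortExact)
    (τ : A) [Simple τ] :
    (IsZero (Ψm.obj τ) ∧ Simple (Φm.obj τ) ∧ Nonempty (τ ≅ Φp.obj (Φm.obj τ))) ∨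
      (IsZero (Φm.obj τ) ∧ ¬ IsZero (Ψm.obj τ) ∧ Nonempty (τ ≅ Ψp.obj (Ψm.obj τ))) := by
  have : Simple ((𝟭 A).obj τ) := ‹Simple τ›
  rcases (hSES τ).isIso_f_or_isIso_g with ⟨hε, hΨ⟩ | ⟨hΦ, hη⟩
  · have : IsIso (ε.app τ) := hε
    have : Simple (Φp.obj (Φm.obj τ)) := Simple.of_iso (asIso (ε.app τ))
    exact Or.inl ⟨hΨ.of_obj_of_comp_iso_id eΨ, Functor.simple_of_simple_obj_of_comp_iso_id eΦ _,
      ⟨(asIso (ε.app τ)).symm⟩⟩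
  · have : IsIso (η.app τ) := hη
    refine Or.inr ⟨hΦ.of_obj_of_comp_iso_id eΦ, fun hΨ => ?_, ⟨asIso (η.app τ)⟩⟩
    exact Simple.not_isZero τ ((Ψp.map_isZero hΨ).of_iso (asIso (η.app τ)))

lemma Simple.exists_unique_nonzero_derivative (eΦ : Φp ⋙ Φm ≅ 𝟭 A) (eΨ : Ψp ⋙ Ψm ≅ 𝟭 A)
    (ε : Φm ⋙ Φp ⟶ 𝟭 A) (η : 𝟭 A ⟶ Ψm ⋙ Ψp) (hcomp : ∀ X : A, ε.app X ≫ η.app X = 0)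
    (hSES : ∀ X : A, (ShortComplex.mk (ε.app X) (η.app X) (hcomp X)).ShortExact)
    (d : ℕ) (τ : A) [Simple τ] (hd : IsZero ((functorPow Φm d).obj τ)) :
    ∃ n : ℕ, ¬ IsZero (Ψm.obj ((functorPow Φm n).obj τ)) ∧
      Nonempty (τ ≅ (functorPow Φp n).obj (Ψp.obj (Ψm.obj ((functorPow Φm n).obj τ)))) ∧
      ∀ n' : ℕ, ¬ IsZero (Ψm.obj ((functorPow Φm n').obj τ)) → n' = n := by
  induction d generalizing τ with
  | zero => exact absurd hd (Simple.not_isZero τ)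
  | succ d ih =>
    rcases Simple.isZero_Ψm_or_isZero_Φm eΦ eΨ ε η hcomp hSES τ with
      ⟨hΨ, hsimple, ⟨e⟩⟩ | ⟨hΦ, hΨ, ⟨e⟩⟩
    · obtain ⟨n, hnz, ⟨e'⟩, huniq⟩ := ih (Φm.obj τ) hd
      refine ⟨n + 1, hnz, ⟨e ≪≫ Φp.mapIso e' ≪≫ eqToIso (functorPow_succ_obj Φp n _).symm⟩, ?_⟩
      rintro (_ | n') hn'
      · exact absurd hΨ hn'
      · rw [huniq n' hn']
    · refine ⟨0, hΨ, ⟨e⟩, ?_⟩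
      rintro (_ | n') hn'
      · rfl
      · exact absurd (Ψm.map_isZero (isZero_functorPow_obj Φm n' hΦ)) hn'

end BernsteinZelevinsky

end CategoryTheory

theorem bernstein_zelevinsky_simple_derivative_general
    {A : Type*} [Category A] [Abelian A]
    (Φp Φm Ψp Ψm : A ⥤ A)
    [PreservesFiniteLimits Φp] [PreservesFiniteLimits Φm]
    [PreservesFiniteLimits Ψp] [PreservesFiniteLimits Ψm]
    (eΦ : Φp ⋙ Φm ≅ 𝟭 A) (eΨ : Ψp ⋙ Ψm ≅ 𝟭 A)
    (ε : (Φm ⋙ Φp) ⟶ 𝟭 A) (η : 𝟭 A ⟶ (Ψm ⋙ Ψp))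
    (hcomp : ∀ X : A, ε.app X ≫ η.app X = 0)
    (hSES : ∀ X : A, (ShortComplex.mk (ε.app X) (η.app X) (hcomp X)).ShortExact)
    (d : ℕ) (τ : A) (hτ : Simple τ) (hd : IsZero ((functorPow Φm d).obj τ)) :
    ∃ k : ℕ, 1 ≤ k ∧
      ¬ IsZero (Ψm.obj ((functorPow Φm (k - 1)).obj τ)) ∧
      Nonempty (τ ≅ (functorPow Φp (k - 1)).obj
        (Ψp.obj (Ψm.obj ((functorPow Φm (k - 1)).obj τ)))) ∧
      ∀ k' : ℕ, 1 ≤ k' → ¬ IsZero (Ψm.obj ((functorPow Φm (k' - 1)).obj τ)) →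
        k' = k := by
  obtain ⟨n, hnz, hiso, huniq⟩ :=
    Simple.exists_unique_nonzero_derivative eΦ eΨ ε η hcomp hSES d τ hd
  refine ⟨n + 1, Nat.le_add_left 1 n, hnz, hiso, fun k' hk' hk'nz => ?_⟩
  have := huniq (k' - 1) hk'nz
  omega

/-- With the Bernstein–Zelevinsky axioms, a simple object `τ` of "size `d`"
(`(Φ⁻)^d τ = 0`) has exactly one `k` with nonzero `k`-th derivative
`τ^{(k)} = Ψ⁻(Φ⁻)^{k-1} τ`, and then `τ ≅ (Φ⁺)^{k-1} Ψ⁺ (τ^{(k)})`. -/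
theorem bernstein_zelevinsky_simple_derivative
    {A : Type*} [Category A] [Abelian A]
    (Φp Φm Ψp Ψm : A ⥤ A)
    (adjΦ : Φp ⊣ Φm)
    [PreservesFiniteLimits Φp] [PreservesFiniteColimits Φp]
    [PreservesFiniteLimits Φm] [PreservesFiniteColimits Φm]
    [PreservesFiniteLimits Ψp] [PreservesFiniteColimits Ψp]
    [PreservesFiniteLimits Ψm] [PreservesFiniteColimits Ψm]
    (eΦ : Φp ⋙ Φm ≅ 𝟭 A) (eΨ : Ψp ⋙ Ψm ≅ 𝟭 A)
    (hΦΨ : ∀ X : A, IsZero (Φm.obj (Ψp.obj X)))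
    (hΨΦ : ∀ X : A, IsZero (Ψm.obj (Φp.obj X)))
    (ε : (Φm ⋙ Φp) ⟶ 𝟭 A) (η : 𝟭 A ⟶ (Ψm ⋙ Ψp))
    (hcomp : ∀ X : A, ε.app X ≫ η.app X = 0)
    (hSES : ∀ X : A, (ShortComplex.mk (ε.app X) (η.app X) (hcomp X)).ShortExact)
    -- `Φ⁺` and `Ψ⁺` preserve being nonzero, and `Φ⁺` preserves irreducibility when
    -- applied to `Ψ⁺` of an object:
    (hΦnz : ∀ X : A, ¬ IsZero X → ¬ IsZero (Φp.obj X))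
    (hΨnz : ∀ X : A, ¬ IsZero X → ¬ IsZero (Ψp.obj X))
    (hΦsimple : ∀ X : A, Simple (Ψp.obj X) → Simple (Φp.obj (Ψp.obj X)))
    (d : ℕ) (τ : A) (hτ : Simple τ) (hd : IsZero ((functorPow Φm d).obj τ)) :
    ∃ k : ℕ, 1 ≤ k ∧
      ¬ IsZero (Ψm.obj ((functorPow Φm (k - 1)).obj τ)) ∧
      Nonempty (τ ≅ (functorPow Φp (k - 1)).obj
        (Ψp.obj (Ψm.obj ((functorPow Φm (k - 1)).obj τ)))) ∧
      ∀ k' : ℕ, 1 ≤ k' → ¬ IsZero (Ψm.obj ((functorPow Φm (k' - 1)).obj τ)) →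
        k' = k :=
  bernstein_zelevinsky_simple_derivative_general Φp Φm Ψp Ψm eΦ eΨ ε η hcomp hSES d τ hτ hd
end
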